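/- arXiv:2503.08795 — 5 statements merged into one kernel-verified Lean document; each statement's English description precedes it below -/
import Mathlib

section
/- Let X : Ω → ℝⁿ be a zero-mean random vector that is sub-Gaussian with matrix variance proxy Σ ⪰ 0. Then for every symmetric positive definite matrix S ∈ ℝ^{n×n}, E[ exp( ‖X‖²_{(Σ+S)⁻¹} / 2 ) ] ≤ √( det(Σ + S) / det(S) ), where ‖x‖²_V := xᵀVx. -/
/-!
Write `A = Σ + S`. Completing the square gives the Gaussian identity
`∫ exp(tᵀx - tᵀAt/2) dt = (2π)^{n/2} det(A)^{-1/2} exp(xᵀA⁻¹x/2)`,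
which turns the integrand `exp(‖X‖²_{A⁻¹}/2)` into a Gaussian average of `exp(tᵀX - tᵀAt/2)`.
After exchanging the two integrals, the sub-Gaussian bound `E[exp(tᵀX)] ≤ exp(tᵀΣt/2)` leaves
`∫ exp(-tᵀSt/2) dt`, and the ratio of the two Gaussian normalising constants is
`√(det A / det S)`.
-/

open MeasureTheory Matrix

noncomputable section

/-- A random vector `X` with mean `μ` is sub-Gaussian with matrix variance proxy `S`
(`X ~ SG(μ, S)`): its moment generating function exists and
`E[exp(λᵀ(X − μ))] ≤ exp(λᵀ S λ / 2)` for all `λ ∈ ℝⁿ`. -/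
def IsSubGaussianMat {Ω : Type*} [MeasurableSpace Ω] {n : ℕ} (P : Measure Ω)
    (X : Ω → Fin n → ℝ) (μ : Fin n → ℝ) (S : Matrix (Fin n) (Fin n) ℝ) : Prop :=
  ∀ l : Fin n → ℝ,
    Integrable (fun ω => Real.exp (l ⬝ᵥ (X ω - μ))) P ∧
    ∫ ω, Real.exp (l ⬝ᵥ (X ω - μ)) ∂P ≤ Real.exp ((l ⬝ᵥ (S *ᵥ l)) / 2)

open Real

theorem integrable_exp_mul_sub_sq_div_two (v : ℝ) :
    Integrable fun u : ℝ => exp (v * u - u ^ 2 / 2) := by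
  have h := (integrable_exp_neg_mul_sq (by norm_num : (0 : ℝ) < 1 / 2)).comp_sub_right v
  refine (h.const_mul (exp (v ^ 2 / 2))).congr (ae_of_all _ fun u => ?_)
  simp only [← exp_add]
  ring_nf

theorem integral_exp_mul_sub_sq_div_two (v : ℝ) :
    ∫ u : ℝ, exp (v * u - u ^ 2 / 2) = √(2 * π) * exp (v ^ 2 / 2) := by
  have hsquare : ∀ u : ℝ,
      exp (v * u - u ^ 2 / 2) = exp (v ^ 2 / 2) * exp (-(1 / 2) * (u - v) ^ 2) := by
    intro u
    rw [← exp_add]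
    ring_nf
  simp_rw [hsquare, integral_const_mul,
    integral_sub_right_eq_self (fun u : ℝ => exp (-(1 / 2) * u ^ 2)) v, integral_gaussian]
  norm_num [div_div_eq_mul_div, mul_comm]

section Gaussian

variable {ι : Type*} [Fintype ι]

theorem lintegral_exp_dotProduct_sub_dotProduct_self (v : ι → ℝ) :
    ∫⁻ u : ι → ℝ, ENNReal.ofReal (exp (v ⬝ᵥ u - u ⬝ᵥ u / 2)) =
      ENNReal.ofReal (√(2 * π) ^ Fintype.card ι * exp (v ⬝ᵥ v / 2)) := by
  have hprod : ∀ u : ι → ℝ,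
      exp (v ⬝ᵥ u - u ⬝ᵥ u / 2) = ∏ i, exp (v i * u i - u i ^ 2 / 2) := by
    intro u
    rw [← exp_sum, dotProduct, dotProduct, Finset.sum_div, ← Finset.sum_sub_distrib]
    simp only [sq]
  have hint : Integrable fun u : ι → ℝ => ∏ i, exp (v i * u i - u i ^ 2 / 2) :=
    Integrable.fintype_prod fun i => integrable_exp_mul_sub_sq_div_two (v i)
  simp_rw [hprod]
  rw [← ofReal_integral_eq_lintegral_ofReal hint
      (ae_of_all _ fun u => Finset.prod_nonneg fun i _ => (exp_pos _).le),
    integral_fintype_prod_volume_eq_prod (fun i (u : ℝ) => exp (v i * u - u ^ 2 / 2))]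
  simp_rw [integral_exp_mul_sub_sq_div_two, Finset.prod_mul_distrib, Finset.prod_const,
    ← exp_sum, Finset.card_univ, dotProduct, Finset.sum_div, sq]

theorem Matrix.PosSemidef.exists_eq_transpose_mul_self {A : Matrix ι ι ℝ}
    (hA : A.PosSemidef) :
    ∃ B : Matrix ι ι ℝ, A = Bᵀ * B := by
  classical
  open scoped MatrixOrder in
  obtain ⟨B, hB⟩ := CStarAlgebra.nonneg_iff_eq_star_mul_self.mp hA.nonneg
  rw [star_eq_conjTranspose, conjTranspose_eq_transpose_of_trivial] at hB
  exact ⟨B, hB⟩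

variable [DecidableEq ι]

theorem lintegral_comp_mulVec {M : Matrix ι ι ℝ} (hM : M.det ≠ 0) (g : (ι → ℝ) → ENNReal) :
    ∫⁻ t, g (M *ᵥ t) = ENNReal.ofReal |M.det|⁻¹ * ∫⁻ u, g u := by
  have hinv : Invertible M := M.invertibleOfIsUnitDet (isUnit_iff_ne_zero.mpr hM)
  have hemb : MeasurableEmbedding (M *ᵥ ·) :=
    (M.toLinearEquiv' hinv).toContinuousLinearEquiv.toHomeomorph.measurableEmbedding
  have hdet : LinearMap.det (toLin' M) = M.det := LinearMap.det_toLin' M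
  rw [← hemb.lintegral_map, show (M *ᵥ ·) = ⇑(toLin' M) from rfl,
    Real.map_linearMap_volume_pi_eq_smul_volume_pi (hdet ▸ hM), lintegral_smul_measure, hdet,
    abs_inv, smul_eq_mul]

theorem lintegral_exp_dotProduct_sub_quadForm {A : Matrix ι ι ℝ} (hA : A.PosDef) (x : ι → ℝ) :
    ∫⁻ t, ENNReal.ofReal (exp (t ⬝ᵥ x - t ⬝ᵥ (A *ᵥ t) / 2)) =
      ENNReal.ofReal (√(2 * π) ^ Fintype.card ι / √A.det * exp (x ⬝ᵥ (A⁻¹ *ᵥ x) / 2)) := by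
  obtain ⟨B, rfl⟩ := hA.posSemidef.exists_eq_transpose_mul_self
  have hdet : (Bᵀ * B).det = B.det ^ 2 := by rw [det_mul, det_transpose, sq]
  have hB : B.det ≠ 0 := fun h => hA.det_pos.ne' (by rw [hdet, h, sq, zero_mul])
  have hBt : IsUnit Bᵀ.det := by rwa [det_transpose, isUnit_iff_ne_zero]
  -- substituting `u = B t` turns the exponent into `y ⬝ᵥ u - u ⬝ᵥ u / 2`, where `Bᵀ y = x`
  set y := (Bᵀ)⁻¹ *ᵥ x
  have hx : Bᵀ *ᵥ y = x := by rw [mulVec_mulVec, mul_nonsing_inv _ hBt, one_mulVec]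
  have hexp : ∀ t,
      t ⬝ᵥ x - t ⬝ᵥ ((Bᵀ * B) *ᵥ t) / 2 = y ⬝ᵥ (B *ᵥ t) - (B *ᵥ t) ⬝ᵥ (B *ᵥ t) / 2 := by
    intro t
    rw [← hx, ← mulVec_mulVec, dotProduct_mulVec, dotProduct_mulVec t, vecMul_transpose,
      dotProduct_comm]
  have hyy : y ⬝ᵥ y = x ⬝ᵥ ((Bᵀ * B)⁻¹ *ᵥ x) := by
    rw [Matrix.mul_inv_rev, ← mulVec_mulVec, dotProduct_mulVec x B⁻¹,
      ← transpose_transpose B⁻¹, vecMul_transpose, transpose_nonsing_inv]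
  simp_rw [hexp]
  rw [lintegral_comp_mulVec hB fun u => ENNReal.ofReal (exp (y ⬝ᵥ u - u ⬝ᵥ u / 2)),
    lintegral_exp_dotProduct_sub_dotProduct_self, ← ENNReal.ofReal_mul (by positivity), hyy,
    hdet, sqrt_sq_eq_abs]
  ring_nf

theorem lintegral_exp_neg_quadForm {A : Matrix ι ι ℝ} (hA : A.PosDef) :
    ∫⁻ t, ENNReal.ofReal (exp (-(t ⬝ᵥ (A *ᵥ t)) / 2)) =
      ENNReal.ofReal (√(2 * π) ^ Fintype.card ι / √A.det) := by
  simpa [neg_div] using lintegral_exp_dotProduct_sub_quadForm hA 0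

theorem ofReal_exp_inv_quadForm_eq_lintegral {A : Matrix ι ι ℝ} (hA : A.PosDef) (x : ι → ℝ) :
    ENNReal.ofReal (exp (x ⬝ᵥ (A⁻¹ *ᵥ x) / 2)) =
      ENNReal.ofReal (√A.det / √(2 * π) ^ Fintype.card ι) *
        ∫⁻ t, ENNReal.ofReal (exp (t ⬝ᵥ x - t ⬝ᵥ (A *ᵥ t) / 2)) := by
  rw [lintegral_exp_dotProduct_sub_quadForm hA, ← ENNReal.ofReal_mul (by positivity)]
  field_simp [(sqrt_pos.mpr hA.det_pos).ne']

end Gaussian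

section SubGaussian

variable {Ω : Type*} [MeasurableSpace Ω] {n : ℕ} {P : Measure Ω} {X : Ω → Fin n → ℝ}
  {Sig : Matrix (Fin n) (Fin n) ℝ}

theorem IsSubGaussianMat.lintegral_exp_dotProduct_le (h : IsSubGaussianMat P X 0 Sig)
    (t : Fin n → ℝ) :
    ∫⁻ ω, ENNReal.ofReal (exp (t ⬝ᵥ X ω)) ∂P ≤ ENNReal.ofReal (exp (t ⬝ᵥ (Sig *ᵥ t) / 2)) := by
  obtain ⟨hint, hle⟩ := h t
  simp only [sub_zero] at hint hle
  rw [← ofReal_integral_eq_lintegral_ofReal hint (ae_of_all _ fun _ => (exp_pos _).le)]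
  exact ENNReal.ofReal_le_ofReal hle

theorem IsSubGaussianMat.lintegral_exp_dotProduct_sub_quadForm_le
    (h : IsSubGaussianMat P X 0 Sig) (S : Matrix (Fin n) (Fin n) ℝ) (t : Fin n → ℝ) :
    ∫⁻ ω, ENNReal.ofReal (exp (t ⬝ᵥ X ω - t ⬝ᵥ ((Sig + S) *ᵥ t) / 2)) ∂P ≤
      ENNReal.ofReal (exp (-(t ⬝ᵥ (S *ᵥ t)) / 2)) := by
  calc ∫⁻ ω, ENNReal.ofReal (exp (t ⬝ᵥ X ω - t ⬝ᵥ ((Sig + S) *ᵥ t) / 2)) ∂P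
      = (∫⁻ ω, ENNReal.ofReal (exp (t ⬝ᵥ X ω)) ∂P) *
          ENNReal.ofReal (exp (-(t ⬝ᵥ ((Sig + S) *ᵥ t)) / 2)) := by
        rw [← lintegral_mul_const' _ _ ENNReal.ofReal_ne_top]
        refine lintegral_congr fun ω => ?_
        rw [← ENNReal.ofReal_mul (exp_pos _).le, ← exp_add, neg_div, sub_eq_add_neg]
    _ ≤ ENNReal.ofReal (exp (t ⬝ᵥ (Sig *ᵥ t) / 2)) *
          ENNReal.ofReal (exp (-(t ⬝ᵥ ((Sig + S) *ᵥ t)) / 2)) := by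
        gcongr
        exact h.lintegral_exp_dotProduct_le t
    _ = ENNReal.ofReal (exp (-(t ⬝ᵥ (S *ᵥ t)) / 2)) := by
        rw [← ENNReal.ofReal_mul (exp_pos _).le, ← exp_add, add_mulVec, dotProduct_add]
        ring_nf

end SubGaussian

/-- Gaussian-smoothing moment bound. If `X` is zero-mean sub-Gaussian with
matrix variance proxy `Σ ⪰ 0`, then for every symmetric positive definite `S`,
`E[exp(‖X‖²_{(Σ+S)⁻¹} / 2)] ≤ √(det(Σ+S)/det S)`. -/
theorem subGaussian_exp_quadratic_bound {Ω : Type*} [MeasurableSpace Ω] {n : ℕ}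
    (P : Measure Ω) [IsProbabilityMeasure P]
    (X : Ω → Fin n → ℝ) (hX : Measurable X)
    (Sig : Matrix (Fin n) (Fin n) ℝ) (hSig : Sig.PosSemidef)
    (hsg : IsSubGaussianMat P X 0 Sig)
    (S : Matrix (Fin n) (Fin n) ℝ) (hS : S.PosDef) :
    ∫⁻ ω, ENNReal.ofReal (Real.exp ((X ω ⬝ᵥ ((Sig + S)⁻¹ *ᵥ X ω)) / 2)) ∂P ≤
      ENNReal.ofReal (Real.sqrt ((Sig + S).det / S.det)) := by
  set A := Sig + S
  have hA : A.PosDef := PosDef.posSemidef_add hSig hS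
  set c := ENNReal.ofReal (√A.det / √(2 * π) ^ n)
  calc ∫⁻ ω, ENNReal.ofReal (exp (X ω ⬝ᵥ (A⁻¹ *ᵥ X ω) / 2)) ∂P
      = c * ∫⁻ ω, (∫⁻ t, ENNReal.ofReal (exp (t ⬝ᵥ X ω - t ⬝ᵥ (A *ᵥ t) / 2))) ∂P := by
        rw [← lintegral_const_mul' _ _ ENNReal.ofReal_ne_top]
        simpa using lintegral_congr fun ω => ofReal_exp_inv_quadForm_eq_lintegral hA (X ω)
    _ = c * ∫⁻ t, ∫⁻ ω, ENNReal.ofReal (exp (t ⬝ᵥ X ω - t ⬝ᵥ (A *ᵥ t) / 2)) ∂P := by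
        rw [lintegral_lintegral_swap (by fun_prop)]
    _ ≤ c * ∫⁻ t, ENNReal.ofReal (exp (-(t ⬝ᵥ (S *ᵥ t)) / 2)) := by
        gcongr with t
        exact hsg.lintegral_exp_dotProduct_sub_quadForm_le S t
    _ = ENNReal.ofReal √(A.det / S.det) := by
        rw [lintegral_exp_neg_quadForm hS, ← ENNReal.ofReal_mul (by positivity),
          Fintype.card_fin, sqrt_div hA.det_pos.le]
        field_simp [(sqrt_pos.mpr hS.det_pos).ne']
end
end

section
/- Let X : Ω → ℝⁿ be a zero-mean random vector that is sub-Gaussian with matrix variance proxy Σ ≻ 0. Then for every m > 0, E[ exp( ‖X‖²_{Σ⁻¹} / (2 + 2m) ) ] ≤ ((1 + m)/m)^{n/2}, where ‖x‖²_{Σ⁻¹} := xᵀΣ⁻¹x. -/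
/-!
For `a > 0`, completing the square shows that `exp (‖y‖² / (2a))` equals `(a / 2π)^{n/2}` times
the integral over `l ∈ ℝⁿ` of `exp (⟪l, y⟫ - a‖l‖² / 2)`. Whitening `X` by `Σ^{-1/2}` turns the
variance proxy into the identity. Apply the identity with `a = 1 + m`, swap the two integrals by
Tonelli and bound the inner expectation by `E exp ⟪l, Y⟫ ≤ exp (‖l‖² / 2)`: what is left is the
Gaussian integral with parameter `m`, and the ratio of the two normalising constants is
`((1 + m) / m)^{n/2}`.
-/

open MeasureTheory Matrix

noncomputable section

open Real
open scoped MatrixOrder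

section GaussianIntegral

variable {b : ℝ}

lemma mul_sub_mul_sq_div_two_eq (hb : 0 < b) (y t : ℝ) :
    t * y - b * t ^ 2 / 2 = y ^ 2 / (2 * b) + -(b / 2) * (t - y / b) ^ 2 := by
  field_simp
  ring

lemma integrable_exp_mul_sub_mul_sq (hb : 0 < b) (y : ℝ) :
    Integrable fun t : ℝ => exp (t * y - b * t ^ 2 / 2) := by
  simp_rw [mul_sub_mul_sq_div_two_eq hb, exp_add]
  exact ((integrable_exp_neg_mul_sq (half_pos hb)).comp_sub_right (y / b)).const_mul _

lemma integral_exp_mul_sub_mul_sq (hb : 0 < b) (y : ℝ) :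
    ∫ t : ℝ, exp (t * y - b * t ^ 2 / 2) = √(2 * π / b) * exp (y ^ 2 / (2 * b)) := by
  simp_rw [mul_sub_mul_sq_div_two_eq hb, exp_add, integral_const_mul]
  rw [integral_sub_right_eq_self (fun t => exp (-(b / 2) * t ^ 2)) (y / b), integral_gaussian,
    mul_comm, div_div_eq_mul_div, mul_comm π]

variable {ι : Type*} [Fintype ι]

lemma exp_dotProduct_sub_mul_dotProduct_self_eq_prod (y l : ι → ℝ) :
    exp (l ⬝ᵥ y - b * (l ⬝ᵥ l) / 2) = ∏ i, exp (l i * y i - b * l i ^ 2 / 2) := by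
  rw [← exp_sum, Finset.sum_sub_distrib, ← Finset.sum_div, ← Finset.mul_sum]
  simp only [dotProduct, sq]

lemma lintegral_exp_dotProduct_sub_mul_dotProduct_self (hb : 0 < b) (y : ι → ℝ) :
    ∫⁻ l : ι → ℝ, ENNReal.ofReal (exp (l ⬝ᵥ y - b * (l ⬝ᵥ l) / 2)) =
      ENNReal.ofReal (√(2 * π / b) ^ Fintype.card ι * exp ((y ⬝ᵥ y) / (2 * b))) := by
  simp_rw [exp_dotProduct_sub_mul_dotProduct_self_eq_prod]
  have hint : Integrable fun l : ι → ℝ => ∏ i, exp (l i * y i - b * l i ^ 2 / 2) :=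
    Integrable.fintype_prod (f := fun i t => exp (t * y i - b * t ^ 2 / 2))
      fun i => integrable_exp_mul_sub_mul_sq hb (y i)
  rw [← ofReal_integral_eq_lintegral_ofReal hint (ae_of_all _ fun l => by positivity),
    integral_fintype_prod_volume_eq_prod (f := fun i t => exp (t * y i - b * t ^ 2 / 2))]
  simp_rw [integral_exp_mul_sub_mul_sq hb, Finset.prod_mul_distrib, Finset.prod_const, ← exp_sum,
    Finset.card_univ, dotProduct, ← Finset.sum_div, sq]

lemma ofReal_exp_dotProduct_self_div_eq (hb : 0 < b) (y : ι → ℝ) :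
    ENNReal.ofReal (exp ((y ⬝ᵥ y) / (2 * b))) =
      ENNReal.ofReal (√(2 * π / b) ^ Fintype.card ι)⁻¹ *
        ∫⁻ l : ι → ℝ, ENNReal.ofReal (exp (l ⬝ᵥ y - b * (l ⬝ᵥ l) / 2)) := by
  have hc : 0 < √(2 * π / b) ^ Fintype.card ι := by positivity
  rw [lintegral_exp_dotProduct_sub_mul_dotProduct_self hb, ← ENNReal.ofReal_mul (by positivity),
    ← mul_assoc, inv_mul_cancel₀ hc.ne', one_mul]

lemma lintegral_exp_neg_mul_dotProduct_self (hb : 0 < b) :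
    ∫⁻ l : ι → ℝ, ENNReal.ofReal (exp (-(b * (l ⬝ᵥ l) / 2))) =
      ENNReal.ofReal (√(2 * π / b) ^ Fintype.card ι) := by
  simpa using lintegral_exp_dotProduct_sub_mul_dotProduct_self hb (0 : ι → ℝ)

end GaussianIntegral

namespace Matrix

variable {ι : Type*} [Fintype ι] [DecidableEq ι]

lemma transpose_cfcSqrt (A : Matrix ι ι ℝ) : (CFC.sqrt A)ᵀ = CFC.sqrt A :=
  (nonneg_iff_posSemidef.mp (CFC.sqrt_nonneg A)).isHermitian

variable {S : Matrix ι ι ℝ} (hS : S.PosDef)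
include hS

lemma PosDef.dotProduct_inv_mulVec_eq (x : ι → ℝ) :
    x ⬝ᵥ (S⁻¹ *ᵥ x) = (CFC.sqrt S⁻¹ *ᵥ x) ⬝ᵥ (CFC.sqrt S⁻¹ *ᵥ x) := by
  rw [eq_comm, dotProduct_mulVec, ← mulVec_transpose, transpose_cfcSqrt, mulVec_mulVec,
    CFC.sqrt_mul_sqrt_self S⁻¹ hS.inv.posSemidef.nonneg, dotProduct_comm]

lemma PosDef.cfcSqrt_inv_mul_mul_transpose : CFC.sqrt S⁻¹ * S * (CFC.sqrt S⁻¹)ᵀ = 1 := by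
  rw [transpose_cfcSqrt]
  refine mul_eq_one_comm.mp ?_
  rw [← mul_assoc, CFC.sqrt_mul_sqrt_self S⁻¹ hS.inv.posSemidef.nonneg,
    nonsing_inv_mul S (isUnit_iff_ne_zero.2 hS.det_pos.ne')]

end Matrix

namespace IsSubGaussianMat

variable {Ω : Type*} [MeasurableSpace Ω] {P : Measure Ω} {n : ℕ} {X : Ω → Fin n → ℝ}
  {μ : Fin n → ℝ} {S : Matrix (Fin n) (Fin n) ℝ}

lemma mulVec {k : ℕ} (hsg : IsSubGaussianMat P X μ S) (A : Matrix (Fin k) (Fin n) ℝ) :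
    IsSubGaussianMat P (fun ω => A *ᵥ X ω) (A *ᵥ μ) (A * S * Aᵀ) := by
  intro l
  have hdot : ∀ ω, l ⬝ᵥ (A *ᵥ X ω - A *ᵥ μ) = l ᵥ* A ⬝ᵥ (X ω - μ) := fun ω => by
    rw [← mulVec_sub, dotProduct_mulVec]
  have hquad : l ⬝ᵥ ((A * S * Aᵀ) *ᵥ l) = l ᵥ* A ⬝ᵥ (S *ᵥ (l ᵥ* A)) := by
    rw [← mulVec_mulVec, ← mulVec_mulVec, dotProduct_mulVec, mulVec_transpose]
  simp_rw [hdot, hquad]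
  exact hsg (l ᵥ* A)

lemma lintegral_exp_le (hsg : IsSubGaussianMat P X μ S) (l : Fin n → ℝ) :
    ∫⁻ ω, ENNReal.ofReal (exp (l ⬝ᵥ (X ω - μ))) ∂P ≤ ENNReal.ofReal (exp ((l ⬝ᵥ (S *ᵥ l)) / 2)) := by
  rw [← ofReal_integral_eq_lintegral_ofReal (hsg l).1 (ae_of_all _ fun ω => by positivity)]
  exact ENNReal.ofReal_le_ofReal (hsg l).2


lemma lintegral_exp_dotProduct_sub_le (hsg : IsSubGaussianMat P X 0 1) (m : ℝ) (l : Fin n → ℝ) :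
    ∫⁻ ω, ENNReal.ofReal (exp (l ⬝ᵥ X ω - (1 + m) * (l ⬝ᵥ l) / 2)) ∂P ≤
      ENNReal.ofReal (exp (-(m * (l ⬝ᵥ l) / 2))) := by
  calc ∫⁻ ω, ENNReal.ofReal (exp (l ⬝ᵥ X ω - (1 + m) * (l ⬝ᵥ l) / 2)) ∂P
      = (∫⁻ ω, ENNReal.ofReal (exp (l ⬝ᵥ (X ω - 0))) ∂P) *
          ENNReal.ofReal (exp (-((1 + m) * (l ⬝ᵥ l) / 2))) := by
        simp_rw [sub_zero, sub_eq_add_neg _ ((1 + m) * _ / 2), exp_add,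
          ENNReal.ofReal_mul (exp_pos _).le]
        exact lintegral_mul_const' _ _ ENNReal.ofReal_ne_top
    _ ≤ ENNReal.ofReal (exp ((l ⬝ᵥ (1 *ᵥ l)) / 2)) *
          ENNReal.ofReal (exp (-((1 + m) * (l ⬝ᵥ l) / 2))) := by
        gcongr
        exact hsg.lintegral_exp_le l
    _ = ENNReal.ofReal (exp (-(m * (l ⬝ᵥ l) / 2))) := by
        rw [← ENNReal.ofReal_mul (exp_pos _).le, ← exp_add, one_mulVec]
        congr 2
        ring

lemma lintegral_exp_dotProduct_self_div_le [SFinite P] (hX : Measurable X)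
    (hsg : IsSubGaussianMat P X 0 1) {m : ℝ} (hm : 0 < m) :
    ∫⁻ ω, ENNReal.ofReal (exp ((X ω ⬝ᵥ X ω) / (2 + 2 * m))) ∂P ≤
      ENNReal.ofReal (((1 + m) / m) ^ ((n : ℝ) / 2)) := by
  have ha : 0 < 1 + m := by positivity
  set c := √(2 * π / (1 + m)) ^ n
  calc ∫⁻ ω, ENNReal.ofReal (exp ((X ω ⬝ᵥ X ω) / (2 + 2 * m))) ∂P
      = ENNReal.ofReal c⁻¹ *
          ∫⁻ ω, (∫⁻ l, ENNReal.ofReal (exp (l ⬝ᵥ X ω - (1 + m) * (l ⬝ᵥ l) / 2))) ∂P := by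
        simp_rw [show 2 + 2 * m = 2 * (1 + m) by ring, ofReal_exp_dotProduct_self_div_eq ha,
          Fintype.card_fin]
        exact lintegral_const_mul' _ _ ENNReal.ofReal_ne_top
    _ = ENNReal.ofReal c⁻¹ *
          ∫⁻ l, ∫⁻ ω, ENNReal.ofReal (exp (l ⬝ᵥ X ω - (1 + m) * (l ⬝ᵥ l) / 2)) ∂P := by
        rw [lintegral_lintegral_swap (by fun_prop)]
    _ ≤ ENNReal.ofReal c⁻¹ * ∫⁻ l, ENNReal.ofReal (exp (-(m * (l ⬝ᵥ l) / 2))) := by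
        gcongr with l
        exact hsg.lintegral_exp_dotProduct_sub_le m l
    _ = ENNReal.ofReal (((1 + m) / m) ^ ((n : ℝ) / 2)) := by
        rw [lintegral_exp_neg_mul_dotProduct_self hm, Fintype.card_fin,
          ← ENNReal.ofReal_mul (by positivity), ← inv_pow, ← mul_pow, ← sqrt_inv,
          ← sqrt_mul (by positivity), sqrt_eq_rpow, ← rpow_natCast, ← rpow_mul (by positivity)]
        congr 2
        · field_simp
        · ring

end IsSubGaussianMat

/-- if `X` is zero-mean sub-Gaussian with matrix variance proxy `Σ ≻ 0`, then
for every `m > 0`, `E[exp(‖X‖²_{Σ⁻¹} / (2 + 2m))] ≤ ((1 + m)/m)^{n/2}`. -/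
theorem subGaussian_exp_mahalanobis_bound {Ω : Type*} [MeasurableSpace Ω] {n : ℕ}
    (P : Measure Ω) [IsProbabilityMeasure P]
    (X : Ω → Fin n → ℝ) (hX : Measurable X)
    (Sig : Matrix (Fin n) (Fin n) ℝ) (hSig : Sig.PosDef)
    (hsg : IsSubGaussianMat P X 0 Sig)
    (m : ℝ) (hm : 0 < m) :
    ∫⁻ ω, ENNReal.ofReal (Real.exp ((X ω ⬝ᵥ (Sig⁻¹ *ᵥ X ω)) / (2 + 2 * m))) ∂P ≤
      ENNReal.ofReal (((1 + m) / m) ^ ((n : ℝ) / 2)) := by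
  have hwhite : IsSubGaussianMat P (fun ω => CFC.sqrt Sig⁻¹ *ᵥ X ω) 0 1 := by
    simpa only [mulVec_zero, hSig.cfcSqrt_inv_mul_mul_transpose] using hsg.mulVec (CFC.sqrt Sig⁻¹)
  simp_rw [hSig.dotProduct_inv_mulVec_eq]
  exact hwhite.lintegral_exp_dotProduct_self_div_le (by fun_prop) hm
end
end

section
/- For every δ ∈ (0,1) and every integer n ≥ 1, the elliptical confidence radius satisfies n + n·g⁻¹(δ^{−2/n}) ≤ (1 + ln 4)·n + 4·ln(1/δ), where g(x) = exp(x)/(1+x) on [0,∞) and g⁻¹ is its inverse. Equivalently, any x with ‖x − μ‖²_{Σ⁻¹} ≤ n + n·g⁻¹(δ^{−2/n}) satisfies ‖x − μ‖²_{Σ⁻¹} ≤ (1 + ln 4)·n + 4·ln(1/δ). -/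
noncomputable section

/-- The function `g(x) = exp(x)/(1+x)` used in the elliptical sub-Gaussian confidence
bound. -/
def g (x : ℝ) : ℝ := Real.exp x / (1 + x)

/-- The inverse of `g` on `[0, ∞)`. -/
def gInv (y : ℝ) : ℝ := Function.invFunOn g (Set.Ici 0) y

lemma g_strictMonoOn : StrictMonoOn g (Set.Ici 0) := by
  intro a ha b hb hab
  simp only [Set.mem_Ici] at ha hb
  have h1a : (0:ℝ) < 1 + a := by linarith
  have h1b : (0:ℝ) < 1 + b := by linarith
  rw [g, g, div_lt_div_iff₀ h1a h1b]
  have hexp : (b - a) + 1 < Real.exp (b - a) :=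
    Real.add_one_lt_exp (by intro h; linarith [sub_eq_zero.mp h])
  have hEb : Real.exp b = Real.exp a * Real.exp (b - a) := by
    rw [← Real.exp_add]; ring_nf
  have hpa : 0 < Real.exp a := Real.exp_pos a
  rw [hEb]
  nlinarith [mul_lt_mul_of_pos_right hexp (mul_pos hpa h1a),
    mul_nonneg (mul_nonneg hpa.le ha) (sub_pos.mpr hab).le]

lemma gInv_le {t x0 : ℝ} (ht : 1 ≤ t) (hx0 : 0 ≤ x0) (hgx0 : t ≤ g x0) :
    gInv t ≤ x0 := by
  have hcont : ContinuousOn g (Set.Icc 0 x0) := by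
    apply ContinuousOn.div Real.continuous_exp.continuousOn
      (by fun_prop)
    intro x hx
    have := hx.1
    intro h; linarith
  have hg0 : g 0 = 1 := by simp [g]
  have hmem : t ∈ Set.Icc (g 0) (g x0) := by
    rw [hg0]; exact ⟨ht, hgx0⟩
  obtain ⟨x, hx, hgx⟩ := intermediate_value_Icc hx0 hcont hmem
  have hxIci : x ∈ Set.Ici (0:ℝ) := hx.1
  have hex : ∃ a ∈ Set.Ici (0:ℝ), g a = t := ⟨x, hxIci, hgx⟩
  have h1 : g (gInv t) = t := Function.invFunOn_eq hex
  have h2 : gInv t ∈ Set.Ici (0:ℝ) := Function.invFunOn_mem hex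
  have hinj : Set.InjOn g (Set.Ici 0) := g_strictMonoOn.injOn
  have : gInv t = x := hinj h2 hxIci (by rw [h1, hgx])
  rw [this]; exact hx.2

/-- for every `δ ∈ (0,1)` and integer `n ≥ 1`, the elliptical confidence
radius satisfies `n + n g⁻¹(δ^{−2/n}) ≤ (1 + ln 4) n + 4 ln(1/δ)`. -/
theorem elliptical_radius_log_bound (n : ℕ) (hn : 1 ≤ n)
    (δ : ℝ) (hδ : δ ∈ Set.Ioo (0 : ℝ) 1) :
    (n : ℝ) + n * gInv (δ ^ (-(2 : ℝ) / n)) ≤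
      (1 + Real.log 4) * n + 4 * Real.log (1 / δ) := by
  obtain ⟨hδ0, hδ1⟩ := hδ
  have hnpos : (0:ℝ) < n := by exact_mod_cast hn
  set t : ℝ := δ ^ (-(2 : ℝ) / n) with htdef
  have ht1 : 1 < t := by
    rw [htdef]
    rw [Real.one_lt_rpow_iff_of_pos hδ0]
    right
    constructor
    · exact hδ1
    · apply div_neg_of_neg_of_pos <;> linarith
  have htpos : (0:ℝ) < t := by linarith
  have hlogt : Real.log t = (-(2:ℝ)/n) * Real.log δ := Real.log_rpow hδ0 _
  have hlogtpos : 0 < Real.log t := Real.log_pos ht1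
  set x0 : ℝ := Real.log 4 + 2 * Real.log t with hx0def
  have hlog4 : (0:ℝ) < Real.log 4 := Real.log_pos (by norm_num)
  have hx0nn : 0 ≤ x0 := by positivity
  -- key inequality: t ≤ g x0
  have hexpx0 : Real.exp x0 = 4 * t ^ 2 := by
    rw [hx0def, Real.exp_add, Real.exp_log (by norm_num : (0:ℝ) < 4)]
    rw [two_mul, Real.exp_add, Real.exp_log htpos]
    ring
  have hlogt_le : Real.log t ≤ t - 1 := Real.log_le_sub_one_of_pos htpos
  have hlog4_le : Real.log 4 ≤ 3 := by
    have := Real.log_le_sub_one_of_pos (by norm_num : (0:ℝ) < 4)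
    linarith
  have hkey : t ≤ g x0 := by
    rw [g, hexpx0, le_div_iff₀ (by rw [hx0def]; positivity)]
    rw [hx0def]
    nlinarith [hlogt_le, hlog4_le, ht1]
  have hginv : gInv t ≤ x0 := gInv_le (le_of_lt ht1) hx0nn hkey
  have hsum : (n:ℝ) * x0 = Real.log 4 * n + 4 * Real.log (1 / δ) := by
    rw [hx0def, Real.log_div one_ne_zero (ne_of_gt hδ0), Real.log_one, hlogt]
    field_simp
    ring
  have : (n:ℝ) * gInv t ≤ (n:ℝ) * x0 :=
    mul_le_mul_of_nonneg_left hginv (le_of_lt hnpos)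
  rw [hsum] at this
  linarith
end
end

section
/- Let s ≥ 0 and c ≥ 1 satisfy exp(s)/(1+s) = c. Then exp(s/2) ≤ c + √(c² − c), and consequently s ≤ 2·ln(c + √(c² − c)) ≤ 2·ln(2c). -/
/-!
Write `t = exp (s / 2)`. Then `t² = exp s = c (1 + s)`, while `1 + s / 2 ≤ t`, so
`t² - 2 c t + c = c (2 + s - 2 t) ≤ 0`. Thus `t` lies below the larger root `c + √(c² - c)` of
`X² - 2 c X + c`, and taking logarithms gives the bounds on `s`.
-/

open Real

theorem le_add_sqrt_of_sq_sub_two_mul_add_nonpos {x b d : ℝ} (h : x ^ 2 - 2 * b * x + d ≤ 0) :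
    x ≤ b + √(b ^ 2 - d) := by
  have hroot : |x - b| ≤ √(b ^ 2 - d) := abs_le_sqrt (by nlinarith)
  linarith [le_abs_self (x - b)]

theorem add_sqrt_sq_sub_self_le_two_mul {c : ℝ} (hc : 0 ≤ c) : c + √(c ^ 2 - c) ≤ 2 * c := by
  have : √(c ^ 2 - c) ≤ c := (sqrt_le_left hc).mpr (by linarith)
  linarith

theorem exp_half_sq_sub_two_mul_add_nonpos {s c : ℝ} (hc : 0 ≤ c) (h : exp s = c * (1 + s)) :
    exp (s / 2) ^ 2 - 2 * c * exp (s / 2) + c ≤ 0 := by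
  have hsq : exp (s / 2) ^ 2 = exp s := by rw [← exp_nat_mul]; ring_nf
  have hlin : s / 2 + 1 ≤ exp (s / 2) := add_one_le_exp _
  rw [hsq, h]
  nlinarith

theorem gInv_quadratic_bound_general (s c : ℝ) (hc : 1 ≤ c)
    (h : Real.exp s / (1 + s) = c) :
    Real.exp (s / 2) ≤ c + Real.sqrt (c ^ 2 - c) ∧
    s ≤ 2 * Real.log (c + Real.sqrt (c ^ 2 - c)) ∧
    2 * Real.log (c + Real.sqrt (c ^ 2 - c)) ≤ 2 * Real.log (2 * c) := by
  have hc0 : 0 < c := by linarith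
  have h1s : 0 < 1 + s := (div_pos_iff_of_pos_left (exp_pos s)).mp (h ▸ hc0)
  have hes : exp s = c * (1 + s) := (div_eq_iff h1s.ne').mp h
  have key : exp (s / 2) ≤ c + √(c ^ 2 - c) :=
    le_add_sqrt_of_sq_sub_two_mul_add_nonpos (exp_half_sq_sub_two_mul_add_nonpos hc0.le hes)
  have hlog : s / 2 ≤ log (c + √(c ^ 2 - c)) := by
    simpa only [log_exp] using log_le_log (exp_pos _) key
  have hlog2 : log (c + √(c ^ 2 - c)) ≤ log (2 * c) :=
    log_le_log (by positivity) (add_sqrt_sq_sub_self_le_two_mul hc0.le)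
  exact ⟨key, by linarith, by linarith⟩

/-- if `s ≥ 0`, `c ≥ 1` and `exp(s)/(1+s) = c`, then
`exp(s/2) ≤ c + √(c² − c)`, and consequently
`s ≤ 2 ln(c + √(c² − c)) ≤ 2 ln(2c)`. -/
theorem gInv_quadratic_bound (s c : ℝ) (hs : 0 ≤ s) (hc : 1 ≤ c)
    (h : Real.exp s / (1 + s) = c) :
    Real.exp (s / 2) ≤ c + Real.sqrt (c ^ 2 - c) ∧
    s ≤ 2 * Real.log (c + Real.sqrt (c ^ 2 - c)) ∧
    2 * Real.log (c + Real.sqrt (c ^ 2 - c)) ≤ 2 * Real.log (2 * c) :=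
  gInv_quadratic_bound_general s c hc h
end

section
/- Let X : Ω → ℝⁿ be a zero-mean random vector that is sub-Gaussian with matrix variance proxy Σ ≻ 0 (n × n positive definite). Then E[‖X‖²] ≤ tr(Σ) · E[‖X‖²_{Σ⁻¹}], and in particular E[‖X‖²] ≤ B(2,n) · tr(Σ), where B(2,n) := 2 · 2^{1/2} · (2e/n)^{n/2} · Γ((n+3)/2), ‖X‖ is the Euclidean norm, and ‖x‖²_{Σ⁻¹} := xᵀΣ⁻¹x. -/
/-!
For `Σ ≻ 0`, Cauchy–Schwarz in the inner product `⟪a, b⟫ = aᵀΣb` applied to `eᵢ` and `Σ⁻¹x` gives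
`xᵢ² ≤ Σᵢᵢ · xᵀΣ⁻¹x`; summing over `i` yields `‖x‖² ≤ tr(Σ) ‖x‖²_{Σ⁻¹}` pointwise.

For the second bound, every projection `vᵀX` is a scalar sub-Gaussian variable with proxy `vᵀΣv`.
Since `cosh y ≥ 1 + y²/2`, `(t²/2) E[(vᵀX)²] ≤ E[cosh (t vᵀX)] - 1 ≤ exp (t² vᵀΣv / 2) - 1`, and letting
`t → 0` gives `E[(vᵀX)²] ≤ vᵀΣv`. Summing over the coordinates, `E‖X‖² ≤ tr(Σ)`. It remains that
`B(2,n) ≥ 1` for `n ≥ 1`: all factors are `≥ 1` when `n ≤ 2`, and `B(p,n) ≤ B(p,n+2)` for `p ≥ 1`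
because `(1 + 2/n)^{n/2} ≤ e`.
-/

open MeasureTheory Matrix

noncomputable section

/-- The moment-bound constant `B(p,n) = p 2^{(p−1)/2} (2e/n)^{n/2} Γ((n+p+1)/2)`. -/
def B (p : ℝ) (n : ℕ) : ℝ :=
  p * 2 ^ ((p - 1) / 2) * (2 * Real.exp 1 / n) ^ ((n : ℝ) / 2) *
    Real.Gamma ((n + p + 1) / 2)

open ProbabilityTheory Filter Topology

namespace Matrix.PosDef

variable {ι : Type*} [Fintype ι] [DecidableEq ι] {A : Matrix ι ι ℝ}

theorem dotProduct_sq_le (hA : A.PosDef) (u v : ι → ℝ) :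
    (u ⬝ᵥ v) ^ 2 ≤ (u ⬝ᵥ A *ᵥ u) * (v ⬝ᵥ A⁻¹ *ᵥ v) := by
  let := A.toSeminormedAddCommGroup hA.posSemidef
  let := A.toInnerProductSpace hA.posSemidef
  have hAA : A *ᵥ (A⁻¹ *ᵥ v) = v := by
    rw [mulVec_mulVec, mul_nonsing_inv _ (A.isUnit_iff_isUnit_det.mp hA.isUnit), one_mulVec]
  have := real_inner_mul_inner_self_le u (A⁻¹ *ᵥ v)
  -- the inner product induced by `A` is `⟪a, b⟫ = (A *ᵥ b) ⬝ᵥ star a`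
  change ((A *ᵥ (A⁻¹ *ᵥ v)) ⬝ᵥ star u) * ((A *ᵥ (A⁻¹ *ᵥ v)) ⬝ᵥ star u) ≤
    ((A *ᵥ u) ⬝ᵥ star u) * ((A *ᵥ (A⁻¹ *ᵥ v)) ⬝ᵥ star (A⁻¹ *ᵥ v)) at this
  simp only [hAA, star_trivial] at this
  rw [dotProduct_comm (A *ᵥ u), dotProduct_comm v u] at this
  rwa [sq]

theorem dotProduct_self_le_trace_mul (hA : A.PosDef) (x : ι → ℝ) :
    x ⬝ᵥ x ≤ A.trace * (x ⬝ᵥ A⁻¹ *ᵥ x) := by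
  calc x ⬝ᵥ x = ∑ i, (Pi.single i 1 ⬝ᵥ x) ^ 2 := by
        simp only [single_dotProduct, one_mul, sq]; rfl
    _ ≤ ∑ i, A i i * (x ⬝ᵥ A⁻¹ *ᵥ x) := by
      gcongr with i
      simpa [mulVec_single, single_dotProduct] using hA.dotProduct_sq_le (Pi.single i 1) x
    _ = A.trace * (x ⬝ᵥ A⁻¹ *ᵥ x) := by rw [← Finset.sum_mul]; rfl

end Matrix.PosDef

theorem Real.one_add_sq_div_two_le_cosh (x : ℝ) : 1 + x ^ 2 / 2 ≤ Real.cosh x := by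
  have := sum_le_hasSum (Finset.range 2) (fun n _ => by rw [pow_mul]; positivity)
    (Real.hasSum_cosh x)
  simpa [Finset.sum_range_succ] using this

namespace ProbabilityTheory.HasSubgaussianMGF

variable {Ω : Type*} [MeasurableSpace Ω] {P : Measure Ω} [IsProbabilityMeasure P]
  {Y : Ω → ℝ} {c : NNReal}

theorem mul_integral_sq_le (h : HasSubgaussianMGF Y c P) (t : ℝ) :
    t ^ 2 / 2 * ∫ ω, Y ω ^ 2 ∂P ≤ Real.exp (c * t ^ 2 / 2) - 1 := by
  have hcosh : Integrable (fun ω => Real.cosh (t * Y ω)) P := by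
    simp_rw [Real.cosh_eq]
    simpa [mul_neg, neg_mul] using
      ((h.integrable_exp_mul t).add (h.integrable_exp_mul (-t))).div_const 2
  have hmgf : ∫ ω, Real.cosh (t * Y ω) ∂P ≤ Real.exp (c * t ^ 2 / 2) := by
    have h₁ := h.mgf_le t
    have h₂ := h.mgf_le (-t)
    simp_rw [Real.cosh_eq]
    rw [integral_div, integral_add (h.integrable_exp_mul t)
      (by simpa using h.integrable_exp_mul (-t))]
    simp only [mgf, neg_mul, neg_sq] at h₁ h₂
    linarith
  calc t ^ 2 / 2 * ∫ ω, Y ω ^ 2 ∂P = ∫ ω, (t * Y ω) ^ 2 / 2 ∂P := by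
        rw [← integral_const_mul]; congr 1 with ω; ring
    _ ≤ ∫ ω, Real.cosh (t * Y ω) - 1 ∂P := by
        refine integral_mono ?_ (hcosh.sub (integrable_const 1)) fun ω => ?_
        · simpa [mul_pow] using ((h.memLp 2).integrable_sq.const_mul (t ^ 2)).div_const 2
        · have := Real.one_add_sq_div_two_le_cosh (t * Y ω); dsimp; linarith
    _ ≤ Real.exp (c * t ^ 2 / 2) - 1 := by
        rw [integral_sub hcosh (integrable_const 1), integral_const, probReal_univ, one_smul]
        linarith

theorem integral_sq_le (h : HasSubgaussianMGF Y c P) : ∫ ω, Y ω ^ 2 ∂P ≤ c := by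
  have hslope : Tendsto (fun r => (Real.exp (c * r) - 1) / r) (𝓝[>] 0) (𝓝 c) := by
    have hd : HasDerivAt (fun r => Real.exp (c * r)) c 0 := by
      simpa using ((hasDerivAt_id (0 : ℝ)).const_mul (c : ℝ)).exp
    refine (hasDerivAt_iff_tendsto_slope.mp hd).mono_left
      (nhdsWithin_mono _ fun r hr => ne_of_gt hr) |>.congr fun r => ?_
    simp [slope_def_field]
  refine ge_of_tendsto hslope (eventually_nhdsWithin_of_forall fun r (hr : 0 < r) => ?_)
  have := h.mul_integral_sq_le (Real.sqrt (2 * r))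
  rw [Real.sq_sqrt (by positivity), show (c : ℝ) * (2 * r) / 2 = c * r by ring,
    show 2 * r / 2 = r by ring] at this
  rw [le_div_iff₀ hr]
  linarith

theorem lintegral_sq_le (h : HasSubgaussianMGF Y c P) :
    ∫⁻ ω, ENNReal.ofReal (Y ω ^ 2) ∂P ≤ c := by
  rw [← ofReal_integral_eq_lintegral_ofReal (h.memLp 2).integrable_sq
    (Eventually.of_forall fun ω => sq_nonneg _)]
  exact (ENNReal.ofReal_le_ofReal h.integral_sq_le).trans_eq ENNReal.ofReal_coe_nnreal

end ProbabilityTheory.HasSubgaussianMGF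

namespace IsSubGaussianMat

variable {Ω : Type*} [MeasurableSpace Ω] {n : ℕ} {P : Measure Ω} {X : Ω → Fin n → ℝ}
  {μ : Fin n → ℝ} {S : Matrix (Fin n) (Fin n) ℝ}

theorem hasSubgaussianMGF_dotProduct (h : IsSubGaussianMat P X μ S) (v : Fin n → ℝ) :
    HasSubgaussianMGF (fun ω => v ⬝ᵥ (X ω - μ)) (v ⬝ᵥ S *ᵥ v).toNNReal P where
  integrable_exp_mul t := by simpa only [smul_dotProduct, smul_eq_mul] using (h (t • v)).1
  mgf_le t := by
    have := (h (t • v)).2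
    simp only [smul_dotProduct, mulVec_smul, dotProduct_smul, smul_eq_mul] at this
    refine this.trans (Real.exp_le_exp.mpr ?_)
    nlinarith [Real.le_coe_toNNReal (v ⬝ᵥ S *ᵥ v), sq_nonneg t]

theorem lintegral_dotProduct_self_le_trace [IsProbabilityMeasure P]
    (h : IsSubGaussianMat P X μ S) (hS : S.PosSemidef) :
    ∫⁻ ω, ENNReal.ofReal ((X ω - μ) ⬝ᵥ (X ω - μ)) ∂P ≤ ENNReal.ofReal S.trace := by
  have hcoord (i : Fin n) : HasSubgaussianMGF (fun ω => (X ω - μ) i) (S i i).toNNReal P := by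
    simpa [single_dotProduct, mulVec_single] using h.hasSubgaussianMGF_dotProduct (Pi.single i 1)
  calc ∫⁻ ω, ENNReal.ofReal ((X ω - μ) ⬝ᵥ (X ω - μ)) ∂P
      = ∑ i, ∫⁻ ω, ENNReal.ofReal ((X ω - μ) i ^ 2) ∂P := by
        rw [← lintegral_finsetSum' _ fun i _ =>
          (hcoord i).aemeasurable.pow_const 2 |>.ennreal_ofReal]
        congr with ω
        rw [← ENNReal.ofReal_sum_of_nonneg fun i _ => sq_nonneg _]
        simp [dotProduct, sq]
    _ ≤ ∑ i, ENNReal.ofReal (S i i) := Finset.sum_le_sum fun i _ => (hcoord i).lintegral_sq_le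
    _ = ENNReal.ofReal S.trace := (ENNReal.ofReal_sum_of_nonneg fun i _ => hS.diag_nonneg).symm

end IsSubGaussianMat

theorem Real.exp_one_div_rpow_self_le {x : ℝ} (hx : 0 < x) :
    (Real.exp 1 / x) ^ x ≤ (x + 1) * (Real.exp 1 / (x + 1)) ^ (x + 1) := by
  have hpow : (1 + 1 / x) ^ x ≤ Real.exp 1 :=
    calc (1 + 1 / x) ^ x ≤ Real.exp (1 / x) ^ x := by
          gcongr; linarith [Real.add_one_le_exp (1 / x)]
      _ = Real.exp 1 := by rw [← Real.exp_mul, one_div_mul_cancel hx.ne']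
  calc (Real.exp 1 / x) ^ x = (Real.exp 1 / (x + 1)) ^ x * (1 + 1 / x) ^ x := by
        rw [← Real.mul_rpow (by positivity) (by positivity)]
        congr 1
        field_simp
    _ ≤ (Real.exp 1 / (x + 1)) ^ x * Real.exp 1 := by gcongr
    _ = (x + 1) * (Real.exp 1 / (x + 1)) ^ (x + 1) := by
        rw [Real.rpow_add_one (by positivity)]
        field_simp

theorem B_le_B_add_two {p : ℝ} (hp : 1 ≤ p) {m : ℕ} (hm : 0 < m) : B p m ≤ B p (m + 2) := by
  set x : ℝ := m / 2 with hx_def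
  set g : ℝ := (m + p + 1) / 2 with hg_def
  have hx : 0 < x := by positivity
  have hΓ : 0 < Real.Gamma g := Real.Gamma_pos_of_pos (by positivity)
  have hstep : (Real.exp 1 / x) ^ x ≤ (Real.exp 1 / (x + 1)) ^ (x + 1) * g :=
    (Real.exp_one_div_rpow_self_le hx).trans_eq (mul_comm _ _) |>.trans
      (by gcongr; rw [hx_def, hg_def]; linarith)
  have hB : B p m = p * 2 ^ ((p - 1) / 2) * (Real.exp 1 / x) ^ x * Real.Gamma g := by
    rw [B, show 2 * Real.exp 1 / m = Real.exp 1 / x by rw [hx_def]; field_simp]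
  have hB₂ : B p (m + 2) =
      p * 2 ^ ((p - 1) / 2) * ((Real.exp 1 / (x + 1)) ^ (x + 1) * g) * Real.Gamma g := by
    rw [B, show ((m + 2 : ℕ) + p + 1) / 2 = g + 1 by push_cast; ring,
      Real.Gamma_add_one (by positivity),
      show 2 * Real.exp 1 / (m + 2 : ℕ) = Real.exp 1 / (x + 1) by push_cast; field_simp; ring,
      show ((m + 2 : ℕ) : ℝ) / 2 = x + 1 by push_cast; ring]
    ring
  rw [hB, hB₂]
  gcongr

theorem one_le_B_two_of_le_two {n : ℕ} (hn : 0 < n) (hn₂ : n ≤ 2) : 1 ≤ B 2 n := by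
  have hn' : (1 : ℝ) ≤ n := by exact_mod_cast hn
  have hn₂' : (n : ℝ) ≤ 2 := by exact_mod_cast hn₂
  have hΓ : 1 ≤ Real.Gamma ((n + 2 + 1) / 2) := Real.Gamma_two.ge.trans <|
    Real.Gamma_strictMonoOn_Ici.monotoneOn (Set.mem_Ici.mpr le_rfl)
      (Set.mem_Ici.mpr (by linarith)) (by linarith)
  have hpow : 1 ≤ (2 * Real.exp 1 / n) ^ ((n : ℝ) / 2) := by
    refine Real.one_le_rpow ?_ (by positivity)
    rw [le_div_iff₀ (by positivity)]
    linarith [Real.add_one_le_exp 1]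
  have h₂ : (1 : ℝ) ≤ 2 ^ (((2 : ℝ) - 1) / 2) := Real.one_le_rpow one_le_two (by norm_num)
  unfold B
  exact one_le_mul_of_one_le_of_one_le (one_le_mul_of_one_le_of_one_le
    (one_le_mul_of_one_le_of_one_le one_le_two h₂) hpow) hΓ

theorem one_le_B_two : ∀ {n : ℕ}, 0 < n → 1 ≤ B 2 n
  | 1, _ => one_le_B_two_of_le_two one_pos one_le_two
  | 2, _ => one_le_B_two_of_le_two two_pos le_rfl
  | m + 3, _ => (one_le_B_two m.succ_pos).trans (B_le_B_add_two one_le_two m.succ_pos)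

theorem subGaussian_second_moment_bound_general {Ω : Type*} [MeasurableSpace Ω] {n : ℕ}
    (P : Measure Ω) [IsProbabilityMeasure P]
    (X : Ω → Fin n → ℝ)
    (Sig : Matrix (Fin n) (Fin n) ℝ) (hSig : Sig.PosDef)
    (hsg : IsSubGaussianMat P X 0 Sig) :
    (∫⁻ ω, ENNReal.ofReal (X ω ⬝ᵥ X ω) ∂P) ≤
        ENNReal.ofReal Sig.trace * ∫⁻ ω, ENNReal.ofReal (X ω ⬝ᵥ (Sig⁻¹ *ᵥ X ω)) ∂P ∧
    (∫⁻ ω, ENNReal.ofReal (X ω ⬝ᵥ X ω) ∂P) ≤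
        ENNReal.ofReal (B 2 n * Sig.trace) := by
  have htrace := hSig.posSemidef.trace_nonneg
  refine ⟨?_, ?_⟩
  · calc ∫⁻ ω, ENNReal.ofReal (X ω ⬝ᵥ X ω) ∂P
        ≤ ∫⁻ ω, ENNReal.ofReal Sig.trace * ENNReal.ofReal (X ω ⬝ᵥ (Sig⁻¹ *ᵥ X ω)) ∂P :=
          lintegral_mono fun ω => by
            rw [← ENNReal.ofReal_mul htrace]
            exact ENNReal.ofReal_le_ofReal (hSig.dotProduct_self_le_trace_mul (X ω))
      _ = ENNReal.ofReal Sig.trace * ∫⁻ ω, ENNReal.ofReal (X ω ⬝ᵥ (Sig⁻¹ *ᵥ X ω)) ∂P :=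
          lintegral_const_mul' _ _ ENNReal.ofReal_ne_top
  · have hB : Sig.trace ≤ B 2 n * Sig.trace := by
      rcases n.eq_zero_or_pos with rfl | hn
      · simp [Matrix.trace]
      · exact le_mul_of_one_le_left htrace (one_le_B_two hn)
    simpa using (hsg.lintegral_dotProduct_self_le_trace hSig.posSemidef).trans
      (ENNReal.ofReal_le_ofReal hB)

/-- second-moment bound. If `X` is zero-mean sub-Gaussian with matrix
variance proxy `Σ ≻ 0`, then `E[‖X‖²] ≤ tr(Σ) E[‖X‖²_{Σ⁻¹}]` and in particular
`E[‖X‖²] ≤ B(2,n) tr(Σ)`. -/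
theorem subGaussian_second_moment_bound {Ω : Type*} [MeasurableSpace Ω] {n : ℕ}
    (P : Measure Ω) [IsProbabilityMeasure P]
    (X : Ω → Fin n → ℝ) (hX : Measurable X)
    (Sig : Matrix (Fin n) (Fin n) ℝ) (hSig : Sig.PosDef)
    (hsg : IsSubGaussianMat P X 0 Sig) :
    (∫⁻ ω, ENNReal.ofReal (X ω ⬝ᵥ X ω) ∂P) ≤
        ENNReal.ofReal Sig.trace * ∫⁻ ω, ENNReal.ofReal (X ω ⬝ᵥ (Sig⁻¹ *ᵥ X ω)) ∂P ∧
    (∫⁻ ω, ENNReal.ofReal (X ω ⬝ᵥ X ω) ∂P) ≤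
        ENNReal.ofReal (B 2 n * Sig.trace) :=
  subGaussian_second_moment_bound_general P X Sig hSig hsg
end
end
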